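/- arXiv:1107.0684 — 4 statements merged into one kernel-verified Lean document; each statement's English description precedes it below -/
import Mathlib

section
/- For every positive integer ℓ, the number of ordered pairs (ℓ₁, ℓ₂) of positive integers with ℓ₁ + ℓ₂ = ℓ and (1/2)·S(ℓ₁) + (1/2)·S(ℓ₂) ≤ (1/2)·S(ℓ) is exactly 2^{S(ℓ)} − 2. -/
/-!
Since `a! * b!` divides `(a + b)!`, Legendre's formula `v₂(n!) = n - S n` gives
`S (a + b) ≤ S a + S b`. Writing `a` and `b` as sums of distinct powers of two, `a + b` is a sum
of `S a + S b` powers of two; if an exponent occurs twice, merging `2 ^ i + 2 ^ i = 2 ^ (i + 1)`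
makes `S (a + b) < S a + S b`. So equality forces `a` and `b` to have disjoint binary supports,
and the admissible pairs `(ℓ₁, ℓ₂)` are exactly the splittings of the binary support of `ℓ` into
two nonempty parts.
-/

/-- `S ℓ` is the sum of the digits of `ℓ` in base 2. -/
def S (ℓ : ℕ) : ℕ := (Nat.digits 2 ℓ).sum

lemma S_two_mul (n : ℕ) : S (2 * n) = S n := by
  rcases n.eq_zero_or_pos with rfl | hn
  · rfl
  · rw [S, Nat.digits_def' one_lt_two (by positivity)]
    simp [S]

lemma S_two_mul_add_one (n : ℕ) : S (2 * n + 1) = S n + 1 := by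
  rw [S, Nat.digits_def' one_lt_two (by positivity)]
  simp [S, Nat.add_mul_div_left, add_comm]

lemma S_eq_card_bitIndices (n : ℕ) : S n = n.bitIndices.toFinset.card := by
  rw [List.toFinset_card_of_nodup Nat.bitIndices_nodup]
  induction n using Nat.evenOddRec with
  | h0 => rfl
  | h_even n ih => simp [S_two_mul, ih]
  | h_odd n ih => simp [S_two_mul_add_one, ih]

lemma S_two_pow (i : ℕ) : S (2 ^ i) = 1 := by
  rw [S_eq_card_bitIndices, Nat.bitIndices_two_pow]
  rfl

lemma S_sum_two_pow (T : Finset ℕ) : S (∑ i ∈ T, 2 ^ i) = T.card := by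
  rw [S_eq_card_bitIndices, Finset.toFinset_bitIndices_sum_two_pow]

lemma S_add_le (a b : ℕ) : S (a + b) ≤ S a + S b := by
  have hval := congrArg (padicValNat 2) (Nat.add_choose_mul_factorial_mul_factorial a b)
  have hC : (a + b).choose b ≠ 0 := (Nat.choose_pos (Nat.le_add_left b a)).ne'
  rw [padicValNat.mul (mul_ne_zero hC a.factorial_ne_zero) b.factorial_ne_zero,
    padicValNat.mul hC a.factorial_ne_zero] at hval
  have ha := sub_one_mul_padicValNat_factorial (p := 2) a
  have hb := sub_one_mul_padicValNat_factorial (p := 2) b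
  have hab := sub_one_mul_padicValNat_factorial (p := 2) (a + b)
  have := Nat.digit_sum_le 2 a
  have := Nat.digit_sum_le 2 b
  have := Nat.digit_sum_le 2 (a + b)
  simp only [S]
  omega

lemma S_sum_map_two_pow_le (M : Multiset ℕ) : S (M.map (2 ^ ·)).sum ≤ M.card := by
  induction M using Multiset.induction with
  | empty => rfl
  | cons i M ih =>
    simp only [Multiset.map_cons, Multiset.sum_cons, Multiset.card_cons]
    have := S_add_le (2 ^ i) (M.map (2 ^ ·)).sum
    rw [S_two_pow] at this
    omega

lemma nodup_of_card_le_S_sum_map_two_pow {M : Multiset ℕ}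
    (h : M.card ≤ S (M.map (2 ^ ·)).sum) : M.Nodup := by
  rw [Multiset.nodup_iff_ne_cons_cons]
  rintro i M rfl
  have hcarry : 2 ^ i + 2 ^ i = 2 ^ (i + 1) := by rw [pow_succ]; ring
  have := S_add_le (2 ^ (i + 1)) (M.map (2 ^ ·)).sum
  rw [S_two_pow] at this
  have := S_sum_map_two_pow_le M
  simp only [Multiset.map_cons, Multiset.sum_cons, Multiset.card_cons, ← add_assoc, hcarry] at h
  omega

lemma disjoint_bitIndices_of_S_add_le {a b : ℕ} (h : S a + S b ≤ S (a + b)) :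
    Disjoint a.bitIndices.toFinset b.bitIndices.toFinset := by
  rw [← Finset.disjoint_val]
  refine (Multiset.nodup_add.1 (nodup_of_card_le_S_sum_map_two_pow ?_)).2.2
  rw [Multiset.map_add, Multiset.sum_add, Multiset.card_add]
  simpa only [← Finset.sum_eq_multiset_sum, Finset.sum_toFinset_bitIndices_two_pow,
    Finset.card_val, ← S_eq_card_bitIndices] using h

lemma bitIndices_toFinset_nonempty {n : ℕ} (hn : 0 < n) : n.bitIndices.toFinset.Nonempty :=
  Finset.nonempty_iff_ne_empty.2 fun h => hn.ne' <| by
    rw [← Finset.sum_toFinset_bitIndices_two_pow n, h, Finset.sum_empty]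

lemma setOf_S_add_le_eq_image (ℓ : ℕ) :
    {p : ℕ × ℕ | 0 < p.1 ∧ 0 < p.2 ∧ p.1 + p.2 = ℓ ∧ S p.1 + S p.2 ≤ S ℓ} =
      (fun T => (∑ i ∈ T, 2 ^ i, ∑ i ∈ ℓ.bitIndices.toFinset \ T, 2 ^ i)) ''
        ↑(Finset.Ioo ∅ ℓ.bitIndices.toFinset) := by
  ext ⟨a, b⟩
  simp only [Set.mem_ofPred_eq, Set.mem_image, Finset.coe_Ioo, Set.mem_Ioo, Prod.mk.injEq]
  constructor
  · rintro ⟨ha, hb, rfl, hS⟩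
    have hdisj := disjoint_bitIndices_of_S_add_le hS
    have hunion :
        (a + b).bitIndices.toFinset = a.bitIndices.toFinset ∪ b.bitIndices.toFinset := by
      rw [← Finset.toFinset_bitIndices_sum_two_pow (_ ∪ _), Finset.sum_union hdisj,
        Finset.sum_toFinset_bitIndices_two_pow, Finset.sum_toFinset_bitIndices_two_pow]
    refine ⟨a.bitIndices.toFinset,
      ⟨Finset.empty_ssubset.2 (bitIndices_toFinset_nonempty ha), ?_⟩,
      Finset.sum_toFinset_bitIndices_two_pow a, ?_⟩
    · rw [hunion]
      exact left_lt_sup.2 fun h =>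
        (bitIndices_toFinset_nonempty hb).ne_empty (hdisj.symm.eq_bot_of_le h)
    · rw [hunion, Finset.union_sdiff_cancel_left hdisj, Finset.sum_toFinset_bitIndices_two_pow]
  · rintro ⟨T, ⟨h0, hT⟩, rfl, rfl⟩
    have hsplit := Finset.sum_sdiff (f := (2 ^ ·)) hT.1
    rw [Finset.sum_toFinset_bitIndices_two_pow] at hsplit
    refine ⟨Finset.sum_pos (fun i _ => by positivity) (Finset.empty_ssubset.1 h0),
      Finset.sum_pos (fun i _ => by positivity) (Finset.sdiff_nonempty.2 hT.2),
      by rw [add_comm, hsplit], ?_⟩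
    rw [S_sum_two_pow, S_sum_two_pow, add_comm, Finset.card_sdiff_add_card_eq_card hT.1,
      S_eq_card_bitIndices]

theorem stmt_4_general (ℓ : ℕ) :
    Nat.card {p : ℕ × ℕ // 0 < p.1 ∧ 0 < p.2 ∧ p.1 + p.2 = ℓ ∧
        (S p.1 : ℚ) / 2 + (S p.2 : ℚ) / 2 ≤ (S ℓ : ℚ) / 2} =
      2 ^ S ℓ - 2 := by
  have halve (x y z : ℕ) : (x : ℚ) / 2 + (y : ℚ) / 2 ≤ (z : ℚ) / 2 ↔ x + y ≤ z := by
    rw [← add_div, div_le_div_iff_of_pos_right two_pos]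
    exact_mod_cast Iff.rfl
  simp_rw [halve]
  have hinj : Function.Injective
      fun T => (∑ i ∈ T, 2 ^ i, ∑ i ∈ ℓ.bitIndices.toFinset \ T, 2 ^ i) :=
    fun _ _ h => Finset.geomSum_injective le_rfl (congrArg Prod.fst h)
  rw [← Set.coe_ofPred, Nat.card_coe_set_eq, setOf_S_add_le_eq_image,
    Set.ncard_image_of_injective _ hinj, Set.ncard_coe_finset,
    Finset.card_Ioo_finset (Finset.empty_subset _), Finset.card_empty, Nat.sub_zero,
    S_eq_card_bitIndices]

theorem stmt_4 (ℓ : ℕ) (hℓ : 0 < ℓ) :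
    Nat.card {p : ℕ × ℕ // 0 < p.1 ∧ 0 < p.2 ∧ p.1 + p.2 = ℓ ∧
        (S p.1 : ℚ) / 2 + (S p.2 : ℚ) / 2 ≤ (S ℓ : ℚ) / 2} =
      2 ^ S ℓ - 2 :=
  stmt_4_general ℓ
end

section
/- Let ℓ₁, ℓ₂, ℓ₃ be pairwise distinct positive integers and let ℓ = ℓ₁ + ℓ₂ + 2ℓ₃. Then (1/2)·S(ℓ₁) + (1/2)·S(ℓ₂) + S(ℓ₃) > (1/2)·S(ℓ). -/
lemma S_def {n : ℕ} (hn : n ≠ 0) : S n = n % 2 + S (n / 2) := by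
  unfold S
  rw [Nat.digits_def' (by norm_num) (Nat.pos_of_ne_zero hn)]
  simp

lemma S_succ_le (n : ℕ) : S (n + 1) ≤ S n + 1 := by
  induction n using Nat.strong_induction_on with
  | _ n ih =>
    rcases Nat.eq_zero_or_pos n with h | h
    · simp [h, S]
    rw [S_def (n := n + 1) (by omega), S_def (n := n) (by omega)]
    rcases Nat.even_or_odd n with he | ho
    · obtain ⟨k, hk⟩ := he
      have h1 : (n + 1) % 2 = 1 := by omega
      have h2 : (n + 1) / 2 = n / 2 := by omega
      rw [h1, h2]; omega
    · obtain ⟨k, hk⟩ := ho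
      have h1 : (n + 1) % 2 = 0 := by omega
      have h2 : (n + 1) / 2 = n / 2 + 1 := by omega
      have := ih (n / 2) (by omega)
      rw [h1, h2]; omega

lemma S_pos {n : ℕ} (hn : 0 < n) : 0 < S n := by
  induction n using Nat.strong_induction_on with
  | _ n ih =>
    rw [S_def (by omega)]
    rcases Nat.even_or_odd n with he | ho
    · obtain ⟨k, hk⟩ := he
      have := ih (n / 2) (by omega) (by omega)
      omega
    · obtain ⟨k, hk⟩ := ho
      omega

theorem stmt_8 (ℓ₁ ℓ₂ ℓ₃ ℓ : ℕ) (h1 : 0 < ℓ₁) (h2 : 0 < ℓ₂) (h3 : 0 < ℓ₃)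
    (h12 : ℓ₁ ≠ ℓ₂) (h13 : ℓ₁ ≠ ℓ₃) (h23 : ℓ₂ ≠ ℓ₃)
    (hℓ : ℓ = ℓ₁ + ℓ₂ + 2 * ℓ₃) :
    (S ℓ : ℚ) / 2 < (S ℓ₁ : ℚ) / 2 + (S ℓ₂ : ℚ) / 2 + (S ℓ₃ : ℚ) := by
  have key : S ℓ < S ℓ₁ + S ℓ₂ + 2 * S ℓ₃ := by
    have hle : S ℓ ≤ S ℓ₁ + S ℓ₂ + S ℓ₃ := by
      calc S ℓ ≤ S (ℓ₁ + ℓ₂) + S (2 * ℓ₃) := by rw [hℓ]; exact S_add_le _ _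
        _ ≤ S ℓ₁ + S ℓ₂ + S ℓ₃ := by
            rw [S_two_mul]; exact Nat.add_le_add_right (S_add_le _ _) _
    have := S_pos h3
    omega
  have : (S ℓ : ℚ) < (S ℓ₁ : ℚ) + S ℓ₂ + 2 * S ℓ₃ := by exact_mod_cast key
  linarith
end

section
/- Let n and s be integers with 2 ≤ s ≤ n − 1, and let d, e ∈ K satisfy v(d) = 0, v(1 − d) = n − s, and v(e) = n − (s−1)/2. Let α(t) = Σ_{ℓ≥0} a_ℓ t^ℓ be a formal power series over K with a₀ = 1 and v(a_ℓ) = (1/2)·S(ℓ) for all ℓ ≥ 1. Then the formal power series ᾶ(t) := d·(1−d)·α(t)/((d + e·t)·(1 − d − e·t)) is well defined over K (the constant terms d and 1−d of the two factors in the denominator are nonzero), and writing ᾶ(t) = Σ_{ℓ≥0} ã_ℓ t^ℓ one has ã₀ = 1 and v(ã_ℓ) = (1/2)·S(ℓ) for all ℓ ≥ 1. -/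
open PowerSeries

theorem S_add_le_s13 (m k : ℕ) : S (m + k) ≤ S m + k := by
  have : Fact (Nat.Prime 2) := ⟨Nat.prime_two⟩
  have legendre (j : ℕ) : padicValNat 2 j.factorial = j - S j := by
    simpa [S] using sub_one_mul_padicValNat_factorial (p := 2) j
  have hmono : padicValNat 2 m.factorial ≤ padicValNat 2 (m + k).factorial :=
    (padicValNat_dvd_iff_le (Nat.factorial_ne_zero _)).1
      (pow_padicValNat_dvd.trans (Nat.factorial_dvd_factorial (Nat.le_add_right m k)))
  have := Nat.digit_sum_le 2 (m + k)
  rw [legendre, legendre] at hmono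
  unfold S at *
  omega

theorem half_S_add_lt {g : WithTop ℚ} (k ℓ : ℕ) (hg : ((k / 2 : ℚ) : WithTop ℚ) < g) :
    ((S (ℓ + k) / 2 : ℚ) : WithTop ℚ) < g + ((S ℓ / 2 : ℚ) : WithTop ℚ) :=
  calc ((S (ℓ + k) / 2 : ℚ) : WithTop ℚ)
      ≤ ((k / 2 : ℚ) : WithTop ℚ) + ((S ℓ / 2 : ℚ) : WithTop ℚ) := by
        rw [← WithTop.coe_add, WithTop.coe_le_coe]
        have : (S (ℓ + k) : ℚ) ≤ S ℓ + k := by exact_mod_cast S_add_le_s13 ℓ k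
        linarith
    _ < g + ((S ℓ / 2 : ℚ) : WithTop ℚ) := WithTop.add_lt_add_right WithTop.coe_ne_top hg

theorem LinearOrderedAddCommGroupWithTop.eq_zero_of_add_self_eq_self {Γ : Type*}
    [LinearOrderedAddCommGroupWithTop Γ] {x : Γ} (hx : x ≠ ⊤) (h : x + x = x) : x = 0 := by
  have := add_neg_cancel_right_of_ne_top hx x
  rwa [h, add_neg_cancel_of_ne_top hx, eq_comm] at this

def AddValuation.ofTopIff {R Γ : Type*} [Ring R] [Nontrivial R]
    [LinearOrderedAddCommGroupWithTop Γ] (v : R → Γ) (hv0 : ∀ x, v x = ⊤ ↔ x = 0)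
    (hvmul : ∀ x y, v (x * y) = v x + v y) (hvadd : ∀ x y, min (v x) (v y) ≤ v (x + y)) :
    AddValuation R Γ :=
  AddValuation.of v ((hv0 0).2 rfl)
    (LinearOrderedAddCommGroupWithTop.eq_zero_of_add_self_eq_self ((hv0 1).not.2 one_ne_zero)
      (by rw [← hvmul, one_mul])) hvadd hvmul

section CommRing

variable {R : Type*} [CommRing R]

theorem PowerSeries.coeff_one_mul_one_add_C_mul_X_add_C_mul_X_sq (B : R⟦X⟧) (a b : R) :
    coeff 1 (B * (1 + C b * X + C a * X ^ 2)) = coeff 1 B + b * coeff 0 B := by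
  rw [show B * (1 + C b * X + C a * X ^ 2) = B + C b * B * X + C a * B * X ^ 2 by ring]
  simp [coeff_succ_mul_X, coeff_mul_X_pow']

theorem PowerSeries.coeff_add_two_mul_one_add_C_mul_X_add_C_mul_X_sq (B : R⟦X⟧) (a b : R)
    (ℓ : ℕ) : coeff (ℓ + 2) (B * (1 + C b * X + C a * X ^ 2)) =
      coeff (ℓ + 2) B + b * coeff (ℓ + 1) B + a * coeff ℓ B := by
  rw [show B * (1 + C b * X + C a * X ^ 2) = B + C b * B * X + C a * B * X ^ 2 by ring]
  simp only [map_add, coeff_mul_X_pow, coeff_succ_mul_X, coeff_C_mul]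

theorem AddValuation.map_coeff_eq_of_mul_eq {Γ : Type*} [LinearOrderedAddCommMonoidWithTop Γ]
    (v : AddValuation R Γ) {α B : R⟦X⟧} {a b : R} {f : ℕ → Γ}
    (hB : B * (1 + C b * X + C a * X ^ 2) = α) (hα : ∀ ℓ, v (coeff ℓ α) = f ℓ)
    (hb : ∀ ℓ, f (ℓ + 1) < v b + f ℓ) (ha : ∀ ℓ, f (ℓ + 2) < v a + f ℓ) (ℓ : ℕ) :
    v (coeff ℓ B) = f ℓ := by
  induction ℓ using Nat.strong_induction_on with
  | _ ℓ ih =>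
    match ℓ with
    | 0 => simpa [← hB] using hα 0
    | 1 =>
      have hB1 : coeff 1 B = coeff 1 α - b * coeff 0 B := by
        rw [← hB, coeff_one_mul_one_add_C_mul_X_add_C_mul_X_sq]; ring
      have hlt : v (coeff 1 α) < v (b * coeff 0 B) := by
        rw [hα, v.map_mul, ih 0 one_pos]
        exact hb 0
      rw [hB1, v.map_sub_eq_of_lt_left hlt, hα]
    | ℓ + 2 =>
      have hBℓ : coeff (ℓ + 2) B =
          coeff (ℓ + 2) α - (b * coeff (ℓ + 1) B + a * coeff ℓ B) := by
        rw [← hB, coeff_add_two_mul_one_add_C_mul_X_add_C_mul_X_sq]; ring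
      have hlt : v (coeff (ℓ + 2) α) < v (b * coeff (ℓ + 1) B + a * coeff ℓ B) := by
        refine v.map_lt_add ?_ ?_
        · rw [hα, v.map_mul, ih (ℓ + 1) (by omega)]
          exact hb (ℓ + 1)
        · rw [hα, v.map_mul, ih ℓ (by omega)]
          exact ha ℓ
      rw [hBℓ, v.map_sub_eq_of_lt_left hlt, hα]

theorem AddValuation.map_coeff_eq_half_S_of_mul_eq (v : AddValuation R (WithTop ℚ))
    {α B : R⟦X⟧} {a b : R} (hB : B * (1 + C b * X + C a * X ^ 2) = α)
    (hα : ∀ ℓ, v (coeff ℓ α) = ((S ℓ / 2 : ℚ) : WithTop ℚ))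
    (hb : ((1 / 2 : ℚ) : WithTop ℚ) < v b) (ha : ((1 : ℚ) : WithTop ℚ) < v a) (ℓ : ℕ) :
    v (coeff ℓ B) = ((S ℓ / 2 : ℚ) : WithTop ℚ) :=
  v.map_coeff_eq_of_mul_eq hB hα (fun ℓ => half_S_add_lt 1 ℓ (by simpa using hb))
    (fun ℓ => half_S_add_lt 2 ℓ (by simpa using ha)) ℓ

end CommRing

section Field

variable {K : Type*} [Field K]

theorem PowerSeries.C_mul_mul_inv_C_mul_mul {c : K} (hc : c ≠ 0) (α D : K⟦X⟧)
    (hD : constantCoeff D ≠ 0) : C c * α * (C c * D)⁻¹ * D = α := by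
  have hcD : constantCoeff (C c * D) ≠ 0 := by simpa using mul_ne_zero hc hD
  rw [show C c * α * (C c * D)⁻¹ * D = α * (C c * D * (C c * D)⁻¹) by ring,
    PowerSeries.mul_inv_cancel _ hcD, mul_one]

theorem PowerSeries.C_add_C_mul_X_mul_C_one_sub_sub_C_mul_X {d : K} (hd : d ≠ 0)
    (hd1 : 1 - d ≠ 0) (e : K) : (C d + C e * X) * (C (1 - d) - C e * X) =
      C (d * (1 - d)) * (1 + C (e * (1 - 2 * d) / (d * (1 - d))) * X
        + C (-e ^ 2 / (d * (1 - d))) * X ^ 2) := by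
  have hc : d * (1 - d) ≠ 0 := mul_ne_zero hd hd1
  rw [mul_add, mul_add, mul_one, ← mul_assoc, ← mul_assoc, ← map_mul, ← map_mul,
    mul_div_cancel₀ _ hc, mul_div_cancel₀ _ hc]
  simp only [map_mul, map_sub, map_one, map_neg, map_pow, map_ofNat]
  ring

theorem AddValuation.map_coeff_eq_half_S (v : AddValuation K (WithTop ℚ)) {n s : ℕ}
    (hs : 1 ≤ s) (hsn : s ≤ n) {d e : K} (hvd : v d = ((0 : ℚ) : WithTop ℚ))
    (hvd1 : v (1 - d) = (((n : ℚ) - s : ℚ) : WithTop ℚ))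
    (hve : v e = (((n : ℚ) - ((s : ℚ) - 1) / 2 : ℚ) : WithTop ℚ)) {α : K⟦X⟧}
    (hα : ∀ ℓ, v (coeff ℓ α) = ((S ℓ / 2 : ℚ) : WithTop ℚ)) (ℓ : ℕ) :
    v (coeff ℓ (C (d * (1 - d)) * α * ((C d + C e * X) * (C (1 - d) - C e * X))⁻¹)) =
      ((S ℓ / 2 : ℚ) : WithTop ℚ) := by
  have hd : d ≠ 0 := v.top_iff.not.1 (by simp [hvd])
  have hd1 : 1 - d ≠ 0 := v.top_iff.not.1 (by simp [hvd1])
  have hs' : (1 : ℚ) ≤ s := by exact_mod_cast hs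
  have hsn' : (s : ℚ) ≤ n := by exact_mod_cast hsn
  have hvc : v (d * (1 - d))⁻¹ = (((s : ℚ) - n : ℚ) : WithTop ℚ) := by
    rw [v.map_inv, v.map_mul, hvd, hvd1, ← WithTop.coe_add,
      ← WithTop.LinearOrderedAddCommGroup.coe_neg]
    congr 1; ring
  have hv12d : 0 ≤ v (1 - 2 * d) := by
    rw [show 1 - 2 * d = (1 - d) - d by ring]
    exact v.map_le_sub (by rw [hvd1]; exact_mod_cast sub_nonneg.2 hsn') hvd.ge
  rw [C_add_C_mul_X_mul_C_one_sub_sub_C_mul_X hd hd1]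
  refine v.map_coeff_eq_half_S_of_mul_eq
    (C_mul_mul_inv_C_mul_mul (mul_ne_zero hd hd1) _ _ (by simp)) hα ?_ ?_ ℓ
  · rw [div_eq_mul_inv (e * _), v.map_mul, v.map_mul, hve, hvc]
    calc ((1 / 2 : ℚ) : WithTop ℚ)
        < (((n : ℚ) - ((s : ℚ) - 1) / 2 : ℚ) : WithTop ℚ) + 0 + (((s : ℚ) - n : ℚ) : WithTop ℚ) :=
          by rw [add_zero, ← WithTop.coe_add, WithTop.coe_lt_coe]; linarith
      _ ≤ _ := by gcongr
  · rw [div_eq_mul_inv (-e ^ 2), v.map_mul, v.map_neg, v.map_pow, hve, hvc, ← WithTop.coe_nsmul,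
      ← WithTop.coe_add, WithTop.coe_lt_coe, nsmul_eq_mul]
    push_cast
    linarith

end Field

theorem stmt_13_general (K : Type*) [Field K] (v : K → WithTop ℚ)
    (hv0 : ∀ x : K, v x = ⊤ ↔ x = 0)
    (hvmul : ∀ x y : K, v (x * y) = v x + v y)
    (hvadd : ∀ x y : K, min (v x) (v y) ≤ v (x + y))
    (n s : ℕ) (hs2 : 2 ≤ s) (hsn : s + 1 ≤ n)
    (d e : K)
    (hvd : v d = ((0 : ℚ) : WithTop ℚ))
    (hvd1 : v (1 - d) = (((n : ℚ) - (s : ℚ) : ℚ) : WithTop ℚ))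
    (hve : v e = (((n : ℚ) - ((s : ℚ) - 1) / 2 : ℚ) : WithTop ℚ))
    (α : PowerSeries K)
    (hα0 : PowerSeries.coeff (R := K) 0 α = 1)
    (hα : ∀ ℓ : ℕ, 1 ≤ ℓ → v (PowerSeries.coeff (R := K) ℓ α) = (((S ℓ : ℚ) / 2 : ℚ) : WithTop ℚ)) :
    d ≠ 0 ∧ 1 - d ≠ 0 ∧
    (PowerSeries.coeff (R := K) 0
        (PowerSeries.C (R := K) (d * (1 - d)) * α *
          ((PowerSeries.C (R := K) d + PowerSeries.C (R := K) e * PowerSeries.X) *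
            (PowerSeries.C (R := K) (1 - d) - PowerSeries.C (R := K) e * PowerSeries.X))⁻¹) = 1) ∧
    (∀ ℓ : ℕ, 1 ≤ ℓ →
      v (PowerSeries.coeff (R := K) ℓ
          (PowerSeries.C (R := K) (d * (1 - d)) * α *
            ((PowerSeries.C (R := K) d + PowerSeries.C (R := K) e * PowerSeries.X) *
              (PowerSeries.C (R := K) (1 - d) - PowerSeries.C (R := K) e * PowerSeries.X))⁻¹)) =
        (((S ℓ : ℚ) / 2 : ℚ) : WithTop ℚ)) := by
  let w := AddValuation.ofTopIff v hv0 hvmul hvadd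
  have hd : d ≠ 0 := (hv0 d).not.1 (by rw [hvd]; exact WithTop.coe_ne_top)
  have hd1 : 1 - d ≠ 0 := (hv0 _).not.1 (by rw [hvd1]; exact WithTop.coe_ne_top)
  have hwα : ∀ ℓ, w (coeff ℓ α) = ((S ℓ / 2 : ℚ) : WithTop ℚ) := by
    rintro (_ | ℓ)
    · simp [w, hα0, S]
    · exact hα (ℓ + 1) ℓ.succ_pos
  rw [coeff_zero_eq_constantCoeff_apply] at hα0
  refine ⟨hd, hd1, by simp [hα0]; field_simp, fun ℓ _ => ?_⟩
  exact w.map_coeff_eq_half_S (by omega) (by omega) hvd hvd1 hve hwα ℓ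

theorem stmt_13 (K : Type*) [Field K] [CharZero K] (v : K → WithTop ℚ)
    (hv0 : ∀ x : K, v x = ⊤ ↔ x = 0)
    (hvmul : ∀ x y : K, v (x * y) = v x + v y)
    (hvadd : ∀ x y : K, min (v x) (v y) ≤ v (x + y))
    (hv2 : v 2 = 1)
    (n s : ℕ) (hs2 : 2 ≤ s) (hsn : s + 1 ≤ n)
    (d e : K)
    (hvd : v d = ((0 : ℚ) : WithTop ℚ))
    (hvd1 : v (1 - d) = (((n : ℚ) - (s : ℚ) : ℚ) : WithTop ℚ))
    (hve : v e = (((n : ℚ) - ((s : ℚ) - 1) / 2 : ℚ) : WithTop ℚ))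
    (α : PowerSeries K)
    (hα0 : PowerSeries.coeff (R := K) 0 α = 1)
    (hα : ∀ ℓ : ℕ, 1 ≤ ℓ → v (PowerSeries.coeff (R := K) ℓ α) = (((S ℓ : ℚ) / 2 : ℚ) : WithTop ℚ)) :
    d ≠ 0 ∧ 1 - d ≠ 0 ∧
    (PowerSeries.coeff (R := K) 0
        (PowerSeries.C (R := K) (d * (1 - d)) * α *
          ((PowerSeries.C (R := K) d + PowerSeries.C (R := K) e * PowerSeries.X) *
            (PowerSeries.C (R := K) (1 - d) - PowerSeries.C (R := K) e * PowerSeries.X))⁻¹) = 1) ∧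
    (∀ ℓ : ℕ, 1 ≤ ℓ →
      v (PowerSeries.coeff (R := K) ℓ
          (PowerSeries.C (R := K) (d * (1 - d)) * α *
            ((PowerSeries.C (R := K) d + PowerSeries.C (R := K) e * PowerSeries.X) *
              (PowerSeries.C (R := K) (1 - d) - PowerSeries.C (R := K) e * PowerSeries.X))⁻¹)) =
        (((S ℓ : ℚ) / 2 : ℚ) : WithTop ℚ)) :=
  stmt_13_general K v hv0 hvmul hvadd n s hs2 hsn d e hvd hvd1 hve α hα0 hα
end

section
/- For all integers m ≥ 1 and j ≥ 1, the 2-adic valuation of the generalized binomial coefficient C(2^{−m}, j) := (∏_{k=0}^{j−1} (2^{−m} − k))/j!, a nonzero rational number, equals S(j) − j − j·m. -/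
namespace padicValRat

variable {p : ℕ} [Fact p.Prime]

theorem prod {ι : Type*} {s : Finset ι} {f : ι → ℚ} (hf : ∀ i ∈ s, f i ≠ 0) :
    padicValRat p (∏ i ∈ s, f i) = ∑ i ∈ s, padicValRat p (f i) := by
  classical
  induction s using Finset.induction_on with
  | empty => simp
  | insert a s ha ih =>
    rw [Finset.prod_insert ha, Finset.sum_insert ha,
      padicValRat.mul (hf a (s.mem_insert_self a))
        (Finset.prod_ne_zero_iff.mpr fun i hi => hf i (Finset.mem_insert_of_mem hi)),
      ih fun i hi => hf i (Finset.mem_insert_of_mem hi)]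

theorem sub_intCast_of_neg {x : ℚ} (hx : padicValRat p x < 0) (k : ℤ) :
    padicValRat p (x - k) = padicValRat p x := by
  rcases eq_or_ne k 0 with rfl | hk
  · simp
  have hx0 : x ≠ 0 := by rintro rfl; simp at hx
  have hk_nonneg : 0 ≤ padicValRat p (-(k : ℚ)) := by
    rw [padicValRat.neg, padicValRat.of_int]; exact Int.natCast_nonneg _
  have hsub : x + -(k : ℚ) ≠ 0 := by
    intro h
    rw [← sub_eq_add_neg, sub_eq_zero] at h
    rw [h, ← padicValRat.neg] at hx
    omega
  rw [sub_eq_add_neg, add_eq_of_lt hsub hx0 (by exact_mod_cast neg_ne_zero.mpr hk)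
    (hx.trans_le hk_nonneg)]

theorem prod_range_sub_natCast_of_neg {x : ℚ} (hx : padicValRat p x < 0) (j : ℕ) :
    (∏ k ∈ Finset.range j, (x - k)) ≠ 0 ∧
      padicValRat p (∏ k ∈ Finset.range j, (x - k)) = j * padicValRat p x := by
  have hval (k : ℕ) : padicValRat p (x - k) = padicValRat p x := by
    exact_mod_cast sub_intCast_of_neg hx k
  have hne (k : ℕ) : x - k ≠ 0 := by
    intro h
    have := hval k
    rw [h, padicValRat.zero] at this
    omega
  refine ⟨Finset.prod_ne_zero_iff.mpr fun k _ => hne k, ?_⟩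
  rw [prod fun k _ => hne k, Finset.sum_congr rfl fun k _ => hval k]
  simp

theorem self_zpow (n : ℤ) : padicValRat p ((p : ℚ) ^ n) = n := by
  rw [padicValRat.zpow, padicValRat.self (Fact.out : p.Prime).one_lt, mul_one]

end padicValRat

theorem padicValNat_two_factorial (n : ℕ) : padicValNat 2 n.factorial = n - S n := by
  simpa [S] using sub_one_mul_padicValNat_factorial (p := 2) n

theorem stmt_14_general (m j : ℕ) (hm : 1 ≤ m) :
    (∏ k ∈ Finset.range j, ((2 : ℚ) ^ (-(m : ℤ)) - (k : ℚ))) / (j.factorial : ℚ) ≠ 0 ∧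
    padicValRat 2
        ((∏ k ∈ Finset.range j, ((2 : ℚ) ^ (-(m : ℤ)) - (k : ℚ))) / (j.factorial : ℚ)) =
      (S j : ℤ) - (j : ℤ) - (j : ℤ) * (m : ℤ) := by
  have hx : padicValRat 2 ((2 : ℚ) ^ (-(m : ℤ))) = -m := by
    exact_mod_cast padicValRat.self_zpow (p := 2) (-(m : ℤ))
  obtain ⟨hprod, hvprod⟩ :=
    padicValRat.prod_range_sub_natCast_of_neg (hx.trans_lt (by omega)) j
  have hfac : (j.factorial : ℚ) ≠ 0 := by exact_mod_cast j.factorial_ne_zero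
  have hvfac : padicValRat 2 (j.factorial : ℚ) = j - S j := by
    rw [padicValRat.of_nat, padicValNat_two_factorial, Nat.cast_sub (show S j ≤ j from Nat.digit_sum_le 2 j)]
  refine ⟨div_ne_zero hprod hfac, ?_⟩
  rw [padicValRat.div hprod hfac, hvprod, hvfac, hx]
  ring

theorem stmt_14 (m j : ℕ) (hm : 1 ≤ m) (hj : 1 ≤ j) :
    (∏ k ∈ Finset.range j, ((2 : ℚ) ^ (-(m : ℤ)) - (k : ℚ))) / (j.factorial : ℚ) ≠ 0 ∧
    padicValRat 2
        ((∏ k ∈ Finset.range j, ((2 : ℚ) ^ (-(m : ℤ)) - (k : ℚ))) / (j.factorial : ℚ)) =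
      (S j : ℤ) - (j : ℤ) - (j : ℤ) * (m : ℤ) :=
  stmt_14_general m j hm
end
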